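/- arXiv:2009.09894 — 2 statements merged into one kernel-verified Lean document; each statement's English description precedes it below -/
import Mathlib

section
/- Let f_R, f_A : [0,∞) → ℝ be continuously differentiable and bounded, with bounded derivatives, and with f_R(r) = f_A(r) = 0 for all r ≥ 1/2. Fix 0 < η_min < η_max and χ ∈ [0,1]. Then there exists a constant C_u > 0 such that for all d ∈ ℝ², all θ, θ̄ ∈ ℝ, and all η, η̄ ∈ [η_min, η_max]: |F(d,(θ,η)) − F(d,(θ̄,η̄))| ≤ C_u (|θ − θ̄| + |η − η̄|). -/
/-!
Writing `T(θ) = (1 + χ)/2 • 1 + (1 - χ)/2 • reflM (2θ)`, where `reflM φ` is the reflection across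
the line of angle `φ/2`, one gets `‖(T(θ) - T(θ')) d‖ = |1 - χ| |sin (θ - θ')| ‖d‖` and
`‖T(θ) d‖ ≤ (|1 + χ| + |1 - χ|)/2 ‖d‖`.
The scalar factors satisfy `|η f(η‖d‖)| ‖d‖ = |φ(η‖d‖)|` with `φ(r) = r f(r)`, which is Lipschitz on
`[0, ∞)` and vanishes on `[1/2, ∞)`. So for `η, η' ≥ η_min` the difference of the factors vanishes
unless `‖d‖ < 1/(2 η_min)`, and this bounds the Lipschitz constant in `η` uniformly in `d`.
-/

open Real Matrix

/-- The rotation matrix `R_θ`. -/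
noncomputable def rotM (θ : ℝ) : Matrix (Fin 2) (Fin 2) ℝ :=
  !![cos θ, -sin θ; sin θ, cos θ]

/-- The tensor `T(θ) = R_θ · diag(1,χ) · R_θᵀ`. -/
noncomputable def TmatM (θ χ : ℝ) : Matrix (Fin 2) (Fin 2) ℝ :=
  rotM θ * !![(1 : ℝ), 0; 0, χ] * (rotM θ)ᵀ

/-- The repulsion force `F_R(d,(θ,η)) = η f_R(η|d|) d`. -/
noncomputable def forceR (fR : ℝ → ℝ) (η : ℝ) (d : EuclideanSpace ℝ (Fin 2)) :
    EuclideanSpace ℝ (Fin 2) :=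
  (η * fR (η * ‖d‖)) • d

/-- The attraction force `F_A(d,(θ,η)) = η f_A(η|d|) T(θ) d`. -/
noncomputable def forceA (fA : ℝ → ℝ) (χ θ η : ℝ) (d : EuclideanSpace ℝ (Fin 2)) :
    EuclideanSpace ℝ (Fin 2) :=
  (η * fA (η * ‖d‖)) • (WithLp.toLp 2 ((TmatM θ χ).mulVec d) : EuclideanSpace ℝ (Fin 2))

/-- The total force `F = F_R + F_A`. -/
noncomputable def forceTot (fR fA : ℝ → ℝ) (χ θ η : ℝ) (d : EuclideanSpace ℝ (Fin 2)) :
    EuclideanSpace ℝ (Fin 2) :=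
  forceR fR η d + forceA fA χ θ η d

noncomputable def reflM (φ : ℝ) : Matrix (Fin 2) (Fin 2) ℝ :=
  !![cos φ, sin φ; sin φ, -cos φ]

lemma TmatM_eq_smul_one_add_smul_reflM (θ χ : ℝ) :
    TmatM θ χ = ((1 + χ) / 2) • (1 : Matrix (Fin 2) (Fin 2) ℝ) + ((1 - χ) / 2) • reflM (2 * θ) := by
  have h := sin_sq_add_cos_sq θ
  ext i j
  fin_cases i <;> fin_cases j <;>
    simp [TmatM, rotM, reflM, Matrix.mul_apply, Fin.sum_univ_two, cos_two_mul, sin_two_mul] <;>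
    grind

lemma EuclideanSpace.norm_sq_eq_two (v : EuclideanSpace ℝ (Fin 2)) : ‖v‖ ^ 2 = v 0 ^ 2 + v 1 ^ 2 := by
  simp [EuclideanSpace.norm_sq_eq, Fin.sum_univ_two]

lemma norm_reflM_mulVec (φ : ℝ) (d : EuclideanSpace ℝ (Fin 2)) :
    ‖(WithLp.toLp 2 (reflM φ *ᵥ d) : EuclideanSpace ℝ (Fin 2))‖ = ‖d‖ := by
  rw [← sq_eq_sq₀ (norm_nonneg _) (norm_nonneg _), EuclideanSpace.norm_sq_eq_two,
    EuclideanSpace.norm_sq_eq_two]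
  simp only [reflM, mulVec, dotProduct, of_apply, cons_val', cons_val_fin_one, cons_val_zero,
    cons_val_one, Fin.sum_univ_two]
  linear_combination (d 0 ^ 2 + d 1 ^ 2) * sin_sq_add_cos_sq φ

lemma sq_cos_sub_cos_add_sq_sin_sub_sin (φ ψ : ℝ) :
    (cos φ - cos ψ) ^ 2 + (sin φ - sin ψ) ^ 2 = (2 * sin ((φ - ψ) / 2)) ^ 2 := by
  rw [cos_sub_cos, sin_sub_sin]
  linear_combination (4 * sin ((φ - ψ) / 2) ^ 2) * sin_sq_add_cos_sq ((φ + ψ) / 2)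

lemma norm_reflM_sub_mulVec (φ ψ : ℝ) (d : EuclideanSpace ℝ (Fin 2)) :
    ‖(WithLp.toLp 2 ((reflM φ - reflM ψ) *ᵥ d) : EuclideanSpace ℝ (Fin 2))‖
      = 2 * |sin ((φ - ψ) / 2)| * ‖d‖ := by
  rw [← sq_eq_sq₀ (norm_nonneg _) (by positivity), EuclideanSpace.norm_sq_eq_two, mul_pow,
    EuclideanSpace.norm_sq_eq_two, mul_pow, sq_abs, ← mul_pow,
    ← sq_cos_sub_cos_add_sq_sin_sub_sin]
  simp only [reflM, mulVec, dotProduct, Matrix.sub_apply, of_apply, cons_val', cons_val_fin_one,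
    cons_val_zero, cons_val_one, Fin.sum_univ_two]
  ring

lemma norm_TmatM_mulVec_le (θ χ : ℝ) (d : EuclideanSpace ℝ (Fin 2)) :
    ‖(WithLp.toLp 2 (TmatM θ χ *ᵥ d) : EuclideanSpace ℝ (Fin 2))‖
      ≤ (|1 + χ| / 2 + |1 - χ| / 2) * ‖d‖ := by
  rw [TmatM_eq_smul_one_add_smul_reflM, add_mulVec, smul_mulVec, smul_mulVec, one_mulVec,
    WithLp.toLp_add, WithLp.toLp_smul, WithLp.toLp_smul]
  refine (norm_add_le _ _).trans_eq ?_
  rw [norm_smul, norm_smul, norm_reflM_mulVec, Real.norm_eq_abs, Real.norm_eq_abs, abs_div,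
    abs_div, abs_two, WithLp.toLp_ofLp]
  ring

lemma norm_TmatM_sub_mulVec (θ θ' χ : ℝ) (d : EuclideanSpace ℝ (Fin 2)) :
    ‖(WithLp.toLp 2 ((TmatM θ χ - TmatM θ' χ) *ᵥ d) : EuclideanSpace ℝ (Fin 2))‖
      = |1 - χ| * |sin (θ - θ')| * ‖d‖ := by
  rw [TmatM_eq_smul_one_add_smul_reflM, TmatM_eq_smul_one_add_smul_reflM, add_sub_add_left_eq_sub,
    ← smul_sub, smul_mulVec, WithLp.toLp_smul, norm_smul, norm_reflM_sub_mulVec, Real.norm_eq_abs,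
    abs_div, abs_two, ← mul_sub, mul_div_cancel_left₀ _ two_ne_zero]
  ring

structure IsCutoffProfile (f : ℝ → ℝ) (M M' : ℝ) : Prop where
  differentiable : Differentiable ℝ f
  abs_le : ∀ r, |f r| ≤ M
  abs_deriv_le : ∀ r, |deriv f r| ≤ M'
  eq_zero_of_ge : ∀ r, 1 / 2 ≤ r → f r = 0

namespace IsCutoffProfile

variable {f : ℝ → ℝ} {M M' : ℝ}

lemma nonneg (hf : IsCutoffProfile f M M') : 0 ≤ M := (abs_nonneg _).trans (hf.abs_le 0)

lemma deriv_bound_nonneg (hf : IsCutoffProfile f M M') : 0 ≤ M' :=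
  (abs_nonneg _).trans (hf.abs_deriv_le 0)

lemma abs_mul_le (hf : IsCutoffProfile f M M') {r : ℝ} (hr : 0 ≤ r) : |r * f r| ≤ M / 2 := by
  rcases le_or_gt (1 / 2) r with hr' | hr'
  · simpa [hf.eq_zero_of_ge r hr'] using div_nonneg hf.nonneg zero_le_two
  · rw [abs_mul, abs_of_nonneg hr]
    nlinarith [hf.abs_le r, abs_nonneg (f r)]

lemma abs_add_mul_deriv_le (hf : IsCutoffProfile f M M') {r : ℝ} (hr : 0 ≤ r) :
    |f r + r * deriv f r| ≤ M + M' / 2 := by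
  rcases le_or_gt r (1 / 2) with hr' | hr'
  · calc |f r + r * deriv f r| ≤ |f r| + r * |deriv f r| := by
          simpa [abs_mul, abs_of_nonneg hr] using abs_add_le (f r) (r * deriv f r)
      _ ≤ M + 1 / 2 * M' := by
          gcongr
          · exact hf.abs_le r
          · exact hf.abs_deriv_le r
      _ = M + M' / 2 := by ring
  · have hzero : f =ᶠ[nhds r] fun _ => 0 :=
      (lt_mem_nhds hr').mono fun x hx => hf.eq_zero_of_ge x hx.le
    have hderiv : deriv f r = 0 := hzero.deriv_eq.trans (deriv_const r 0)
    rw [hzero.eq_of_nhds, hderiv, mul_zero, add_zero, abs_zero]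
    linarith [hf.nonneg, hf.deriv_bound_nonneg]

lemma abs_mul_sub_mul_le (hf : IsCutoffProfile f M M') {r r' : ℝ} (hr : 0 ≤ r) (hr' : 0 ≤ r') :
    |r * f r - r' * f r'| ≤ (M + M' / 2) * |r - r'| := by
  have hderiv (x : ℝ) : HasDerivAt (fun x => x * f x) (f x + x * deriv f x) x := by
    simpa using (hasDerivAt_id' x).fun_mul (hf.differentiable x).hasDerivAt
  simpa [Real.norm_eq_abs] using Convex.norm_image_sub_le_of_norm_hasDerivWithin_le
    (fun x _ => (hderiv x).hasDerivWithinAt) (fun x hx => hf.abs_add_mul_deriv_le hx)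
    (convex_Ici 0) (Set.mem_Ici.2 hr') (Set.mem_Ici.2 hr)

lemma abs_mul_scale_mul_le (hf : IsCutoffProfile f M M') {η s : ℝ} (hη : 0 ≤ η) (hs : 0 ≤ s) :
    |η * f (η * s)| * s ≤ M / 2 := by
  calc |η * f (η * s)| * s = |η * s * f (η * s)| := by
        rw [abs_mul, abs_mul, abs_mul, abs_of_nonneg hs]; ring
    _ ≤ M / 2 := hf.abs_mul_le (mul_nonneg hη hs)

lemma abs_mul_scale_sub_le (hf : IsCutoffProfile f M M') {ηmin η η' s : ℝ} (hmin : 0 < ηmin)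
    (hη : ηmin ≤ η) (hη' : ηmin ≤ η') (hs : 0 ≤ s) :
    |η * f (η * s) - η' * f (η' * s)| * s ≤ (M + M' / 2) / (2 * ηmin) * |η - η'| := by
  have hL : 0 ≤ M + M' / 2 := by linarith [hf.nonneg, hf.deriv_bound_nonneg]
  rcases le_or_gt (1 / 2) (ηmin * s) with hfar | hnear
  · have hzero {ν : ℝ} (hν : ηmin ≤ ν) : f (ν * s) = 0 :=
      hf.eq_zero_of_ge _ (hfar.trans (mul_le_mul_of_nonneg_right hν hs))
    simp only [hzero hη, hzero hη', mul_zero, sub_zero, abs_zero, zero_mul]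
    positivity
  · have hs' : s ≤ (2 * ηmin)⁻¹ := by
      rw [← one_div, le_div_iff₀ (by positivity)]
      linarith
    calc |η * f (η * s) - η' * f (η' * s)| * s
        = |(η * f (η * s) - η' * f (η' * s)) * s| := by rw [abs_mul, abs_of_nonneg hs]
      _ = |η * s * f (η * s) - η' * s * f (η' * s)| := by ring_nf
      _ ≤ (M + M' / 2) * |η * s - η' * s| :=
          hf.abs_mul_sub_mul_le (by nlinarith) (by nlinarith)
      _ = (M + M' / 2) * s * |η - η'| := by
          rw [← sub_mul, abs_mul, abs_of_nonneg hs]; ring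
      _ ≤ (M + M' / 2) / (2 * ηmin) * |η - η'| := by
          rw [div_eq_mul_inv]
          exact mul_le_mul_of_nonneg_right (mul_le_mul_of_nonneg_left hs' hL) (abs_nonneg _)

end IsCutoffProfile

section Forces

variable {fR fA : ℝ → ℝ} {M M' ηmin η η' : ℝ}

lemma norm_forceR_sub_le (hf : IsCutoffProfile fR M M') (hmin : 0 < ηmin) (hη : ηmin ≤ η)
    (hη' : ηmin ≤ η') (d : EuclideanSpace ℝ (Fin 2)) :
    ‖forceR fR η d - forceR fR η' d‖ ≤ (M + M' / 2) / (2 * ηmin) * |η - η'| := by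
  rw [forceR, forceR, ← sub_smul, norm_smul, Real.norm_eq_abs]
  exact hf.abs_mul_scale_sub_le hmin hη hη' (norm_nonneg d)

lemma norm_forceA_sub_le (hf : IsCutoffProfile fA M M') (hmin : 0 < ηmin) (hη : ηmin ≤ η)
    (hη' : ηmin ≤ η') (χ θ θ' : ℝ) (d : EuclideanSpace ℝ (Fin 2)) :
    ‖forceA fA χ θ η d - forceA fA χ θ' η' d‖
      ≤ (|1 + χ| / 2 + |1 - χ| / 2) * ((M + M' / 2) / (2 * ηmin)) * |η - η'|
        + |1 - χ| * (M / 2) * |θ - θ'| := by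
  set a := η * fA (η * ‖d‖)
  set a' := η' * fA (η' * ‖d‖)
  set u : EuclideanSpace ℝ (Fin 2) := WithLp.toLp 2 (TmatM θ χ *ᵥ d)
  have hsplit : forceA fA χ θ η d - forceA fA χ θ' η' d
      = (a - a') • u + a' • WithLp.toLp 2 ((TmatM θ χ - TmatM θ' χ) *ᵥ d) := by
    rw [forceA, forceA, sub_mulVec, WithLp.toLp_sub]
    module
  have hsin := Real.abs_sin_le_abs (x := θ - θ')
  have hscale : |a - a'| * ‖d‖ ≤ (M + M' / 2) / (2 * ηmin) * |η - η'| :=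
    hf.abs_mul_scale_sub_le hmin hη hη' (norm_nonneg d)
  have hsize : |a'| * ‖d‖ ≤ M / 2 :=
    hf.abs_mul_scale_mul_le (hmin.le.trans hη') (norm_nonneg d)
  calc ‖forceA fA χ θ η d - forceA fA χ θ' η' d‖
      ≤ |a - a'| * ((|1 + χ| / 2 + |1 - χ| / 2) * ‖d‖)
        + |a'| * (|1 - χ| * |sin (θ - θ')| * ‖d‖) := by
        rw [hsplit, ← norm_TmatM_sub_mulVec, ← Real.norm_eq_abs (a - a'), ← Real.norm_eq_abs a']
        refine (norm_add_le _ _).trans ?_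
        rw [norm_smul, norm_smul]
        gcongr
        exact norm_TmatM_mulVec_le θ χ d
    _ = (|1 + χ| / 2 + |1 - χ| / 2) * (|a - a'| * ‖d‖)
        + |1 - χ| * |sin (θ - θ')| * (|a'| * ‖d‖) := by ring
    _ ≤ (|1 + χ| / 2 + |1 - χ| / 2) * ((M + M' / 2) / (2 * ηmin) * |η - η'|)
        + |1 - χ| * |θ - θ'| * (M / 2) := by gcongr
    _ = _ := by ring

end Forces

theorem force_lipschitz_in_control_general (fR fA : ℝ → ℝ) (χ ηmin ηmax : ℝ)
    (hfRc : ContDiff ℝ 1 fR) (hfAc : ContDiff ℝ 1 fA)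
    (hfRb : ∃ M, ∀ r, |fR r| ≤ M) (hfAb : ∃ M, ∀ r, |fA r| ≤ M)
    (hfRd : ∃ M, ∀ r, |deriv fR r| ≤ M) (hfAd : ∃ M, ∀ r, |deriv fA r| ≤ M)
    (hfR0 : ∀ r : ℝ, 1 / 2 ≤ r → fR r = 0) (hfA0 : ∀ r : ℝ, 1 / 2 ≤ r → fA r = 0)
    (hmin : 0 < ηmin) :
    ∃ Cu > 0, ∀ d : EuclideanSpace ℝ (Fin 2), ∀ θ θbar : ℝ,
      ∀ η ∈ Set.Icc ηmin ηmax, ∀ ηbar ∈ Set.Icc ηmin ηmax,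
      ‖forceTot fR fA χ θ η d - forceTot fR fA χ θbar ηbar d‖
        ≤ Cu * (|θ - θbar| + |η - ηbar|) := by
  obtain ⟨MR, hMR⟩ := hfRb
  obtain ⟨MA, hMA⟩ := hfAb
  obtain ⟨MR', hMR'⟩ := hfRd
  obtain ⟨MA', hMA'⟩ := hfAd
  have hR : IsCutoffProfile fR MR MR' := ⟨hfRc.differentiable one_ne_zero, hMR, hMR', hfR0⟩
  have hA : IsCutoffProfile fA MA MA' := ⟨hfAc.differentiable one_ne_zero, hMA, hMA', hfA0⟩
  set Lη := (MR + MR' / 2) / (2 * ηmin)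
    + (|1 + χ| / 2 + |1 - χ| / 2) * ((MA + MA' / 2) / (2 * ηmin))
  set Lθ := |1 - χ| * (MA / 2)
  have hLη : 0 ≤ Lη := by
    have := hR.nonneg; have := hR.deriv_bound_nonneg
    have := hA.nonneg; have := hA.deriv_bound_nonneg
    positivity
  have hLθ : 0 ≤ Lθ := mul_nonneg (abs_nonneg _) (div_nonneg hA.nonneg zero_le_two)
  refine ⟨Lη + Lθ + 1, by positivity, fun d θ θbar η hη ηbar hηbar => ?_⟩
  calc ‖forceTot fR fA χ θ η d - forceTot fR fA χ θbar ηbar d‖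
      = ‖(forceR fR η d - forceR fR ηbar d)
          + (forceA fA χ θ η d - forceA fA χ θbar ηbar d)‖ := by
        rw [forceTot, forceTot, add_sub_add_comm]
    _ ≤ Lη * |η - ηbar| + Lθ * |θ - θbar| := by
        refine (norm_add_le_of_le (norm_forceR_sub_le hR hmin hη.1 hηbar.1 d)
          (norm_forceA_sub_le hA hmin hη.1 hηbar.1 χ θ θbar d)).trans_eq ?_
        ring
    _ ≤ (Lη + Lθ + 1) * (|θ - θbar| + |η - ηbar|) := by
        nlinarith [abs_nonneg (θ - θbar), abs_nonneg (η - ηbar)]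

/-- Lipschitz continuity of the total force in the control `(θ,η)`, uniformly in `d`. -/
theorem force_lipschitz_in_control (fR fA : ℝ → ℝ) (χ ηmin ηmax : ℝ)
    (hfRc : ContDiff ℝ 1 fR) (hfAc : ContDiff ℝ 1 fA)
    (hfRb : ∃ M, ∀ r, |fR r| ≤ M) (hfAb : ∃ M, ∀ r, |fA r| ≤ M)
    (hfRd : ∃ M, ∀ r, |deriv fR r| ≤ M) (hfAd : ∃ M, ∀ r, |deriv fA r| ≤ M)
    (hfR0 : ∀ r : ℝ, 1 / 2 ≤ r → fR r = 0) (hfA0 : ∀ r : ℝ, 1 / 2 ≤ r → fA r = 0)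
    (hχ : χ ∈ Set.Icc (0 : ℝ) 1) (hmin : 0 < ηmin) (hminmax : ηmin < ηmax) :
    ∃ Cu > 0, ∀ d : EuclideanSpace ℝ (Fin 2), ∀ θ θbar : ℝ,
      ∀ η ∈ Set.Icc ηmin ηmax, ∀ ηbar ∈ Set.Icc ηmin ηmax,
      ‖forceTot fR fA χ θ η d - forceTot fR fA χ θbar ηbar d‖
        ≤ Cu * (|θ - θbar| + |η - ηbar|) :=
  force_lipschitz_in_control_general fR fA χ ηmin ηmax hfRc hfAc hfRb hfAb hfRd hfAd hfR0 hfA0 hmin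
end

section
/- Let N ∈ ℕ, N ≥ 1, let G : ℝ² × ℝ² → ℝ² be bounded with |G(d,p) − G(d̄,p)| ≤ C_d |d − d̄| and |G(d,p) − G(d,p̄)| ≤ C_u |p − p̄| for all arguments, and let u, ū : ℝ² → ℝ² be controls with ū L-Lipschitz and M := sup_x |u(x) − ū(x)| < ∞. Let x and x̄ be continuously differentiable solutions on [0,∞) of the particle systems x_i' = (1/N) Σ_j G(x_i − x_j, u(x_i)) and x̄_i' = (1/N) Σ_j G(x̄_i − x̄_j, ū(x̄_i)) respectively. Then there exist constants a > 0 and b > 0 depending only on C_d, C_u and L (in particular independent of N) such that for all t ≥ 0: (1/N) Σ_{i=1}^N |x_i(t) − x̄_i(t)|² ≤ ((1/N) Σ_{i=1}^N |x_i(0) − x̄_i(0)|² + b M²) · e^{a t}. -/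
/-!
The mean squared distance `ψ(t) = (1/N) Σ |x_i − x̄_i|²` satisfies
`ψ' = (2/N) Σ ⟨x_i − x̄_i, V_i − V̄_i⟩`. By the two Lipschitz bounds on `G` and the
triangle inequality `|u(x_i) − ū(x̄_i)| ≤ M + L |x_i − x̄_i|`, each velocity difference is at most
`(C_d + C_u L)|x_i − x̄_i| + C_d S + C_u M`, where `S = (1/N) Σ_j |x_j − x̄_j|` and `S² ≤ ψ`
by Cauchy–Schwarz. Hence `ψ' ≤ a (ψ + M²)` with `a = 4 C_d + 2 C_u L + C_u² + 1`, and Grönwall's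
inequality applied to `ψ + M²` gives the estimate with `b = 1`. Nothing depends on `N` because
every sum over particles enters only through an average.
-/

open MeasureTheory Set

/-- The plane `ℝ²` with the Euclidean norm. -/
abbrev E2 := EuclideanSpace ℝ (Fin 2)

/-- The right-hand side of the controlled interacting particle system:
`V(x)_i = (1/N) Σ_j G(x_i − x_j, u(x_i))`. -/
noncomputable def pV (N : ℕ) (G : E2 → E2 → E2) (u : E2 → E2)
    (x : Fin N → E2) : Fin N → E2 :=
  fun i => (N : ℝ)⁻¹ • ∑ j : Fin N, G (x i - x j) (u (x i))

open Real
open scoped RealInnerProductSpace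

theorem le_add_mul_exp_of_hasDerivWithinAt_le {f f' : ℝ → ℝ} {K c a t : ℝ} (hc : 0 ≤ c)
    (hf : ∀ s ∈ Ici a, HasDerivWithinAt f (f' s) (Ici a) s)
    (bound : ∀ s ∈ Ici a, f' s ≤ K * (f s + c)) (ht : a ≤ t) :
    f t ≤ (f a + c) * exp (K * (t - a)) := by
  have hg : ∀ s ∈ Ici a, HasDerivWithinAt (f · + c) (f' s) (Ici a) s :=
    fun s hs => (hf s hs).add_const c
  have key := le_gronwallBound_of_liminf_deriv_right_le (f := (f · + c)) (ε := 0) (b := t)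
    (fun s hs => ((hg s hs.1).continuousWithinAt).mono Icc_subset_Ici_self)
    (fun s hs r hr => by
      simpa [slope_def_field, div_eq_inv_mul] using
        ((hg s hs.1).mono (Ici_subset_Ici.mpr hs.1)).liminf_right_slope_le hr)
    le_rfl (fun s hs => by simpa using bound s hs.1) t ⟨ht, le_rfl⟩
  rw [gronwallBound_ε0] at key
  linarith

theorem HasDerivWithinAt.sum_norm_sq {ι F : Type*} [Fintype ι] [NormedAddCommGroup F]
    [InnerProductSpace ℝ F] {y : ℝ → ι → F} {y' : ι → F} {s : Set ℝ} {t : ℝ}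
    (hy : HasDerivWithinAt y y' s t) :
    HasDerivWithinAt (fun t => ∑ i, ‖y t i‖ ^ 2) (∑ i, 2 * ⟪y t i, y' i⟫) s t :=
  HasDerivWithinAt.fun_sum fun i _ => (hasDerivWithinAt_pi.1 hy i).norm_sq

theorem norm_sub_le_of_lipschitz_each {D P F : Type*} [SeminormedAddCommGroup D]
    [SeminormedAddCommGroup P] [SeminormedAddCommGroup F] {G : D → P → F} {Cd Cu : ℝ}
    (hGd : ∀ d d' p, ‖G d p - G d' p‖ ≤ Cd * ‖d - d'‖)
    (hGu : ∀ d p p', ‖G d p - G d p'‖ ≤ Cu * ‖p - p'‖) (d d' : D) (p p' : P) :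
    ‖G d p - G d' p'‖ ≤ Cd * ‖d - d'‖ + Cu * ‖p - p'‖ :=
  (norm_sub_le_norm_sub_add_norm_sub _ (G d' p) _).trans <| add_le_add (hGd _ _ _) (hGu _ _ _)

theorem mean_inner_le_of_norm_le {N : ℕ} {F : Type*} [NormedAddCommGroup F]
    [InnerProductSpace ℝ F] {e D : Fin N → F} {α β γ : ℝ} (hβ : 0 ≤ β)
    (hD : ∀ i, ‖D i‖ ≤ α * ‖e i‖ + β * ((N : ℝ)⁻¹ * ∑ j, ‖e j‖) + γ) :
    (N : ℝ)⁻¹ * ∑ i, 2 * ⟪e i, D i⟫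
      ≤ (2 * α + 2 * β + 1) * ((N : ℝ)⁻¹ * ∑ i, ‖e i‖ ^ 2) + γ ^ 2 := by
  set S := (N : ℝ)⁻¹ * ∑ j, ‖e j‖
  set ψ := (N : ℝ)⁻¹ * ∑ i, ‖e i‖ ^ 2
  have hS : S ^ 2 ≤ ψ := by
    simpa [S, ψ, inv_mul_eq_div] using
      sum_div_card_sq_le_sum_sq_div_card (s := Finset.univ) (f := fun j => ‖e j‖)
  have hterm : ∀ i, 2 * ⟪e i, D i⟫ ≤ 2 * α * ‖e i‖ ^ 2 + 2 * (β * S + γ) * ‖e i‖ :=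
    fun i => calc
      2 * ⟪e i, D i⟫ ≤ 2 * (‖e i‖ * ‖D i‖) := by gcongr; exact real_inner_le_norm _ _
      _ ≤ 2 * (‖e i‖ * (α * ‖e i‖ + β * S + γ)) := by gcongr; exact hD i
      _ = 2 * α * ‖e i‖ ^ 2 + 2 * (β * S + γ) * ‖e i‖ := by ring
  calc (N : ℝ)⁻¹ * ∑ i, 2 * ⟪e i, D i⟫
      ≤ (N : ℝ)⁻¹ * ∑ i, (2 * α * ‖e i‖ ^ 2 + 2 * (β * S + γ) * ‖e i‖) := by
        gcongr with i; exact hterm i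
    _ = 2 * α * ψ + 2 * β * S ^ 2 + 2 * γ * S := by
        simp only [ψ, S, Finset.sum_add_distrib, ← Finset.mul_sum]; ring
    _ ≤ (2 * α + 2 * β + 1) * ψ + γ ^ 2 := by
        nlinarith [mul_le_mul_of_nonneg_left hS hβ, sq_nonneg (γ - S)]

theorem norm_pV_sub_pV_le {N : ℕ} {G : E2 → E2 → E2} {u ubar : E2 → E2} {Cd Cu L M : ℝ}
    (hCd : 0 ≤ Cd) (hCu : 0 ≤ Cu)
    (hGd : ∀ d d' p : E2, ‖G d p - G d' p‖ ≤ Cd * ‖d - d'‖)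
    (hGu : ∀ d p p' : E2, ‖G d p - G d p'‖ ≤ Cu * ‖p - p'‖)
    (hub : ∀ x y : E2, ‖ubar x - ubar y‖ ≤ L * ‖x - y‖) (hM : ∀ x : E2, ‖u x - ubar x‖ ≤ M)
    (x xbar : Fin N → E2) (i : Fin N) :
    ‖pV N G u x i - pV N G ubar xbar i‖
      ≤ (Cd + Cu * L) * ‖x i - xbar i‖ + Cd * ((N : ℝ)⁻¹ * ∑ j, ‖x j - xbar j‖) + Cu * M := by
  have hN : (N : ℝ) ≠ 0 := by exact_mod_cast i.pos.ne'
  have hcontrol : ‖u (x i) - ubar (xbar i)‖ ≤ M + L * ‖x i - xbar i‖ :=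
    (norm_sub_le_norm_sub_add_norm_sub _ (ubar (x i)) _).trans (add_le_add (hM _) (hub _ _))
  have hterm : ∀ j, ‖G (x i - x j) (u (x i)) - G (xbar i - xbar j) (ubar (xbar i))‖
      ≤ (Cd + Cu * L) * ‖x i - xbar i‖ + Cu * M + Cd * ‖x j - xbar j‖ := fun j => calc
    _ ≤ Cd * ‖(x i - xbar i) - (x j - xbar j)‖ + Cu * ‖u (x i) - ubar (xbar i)‖ := by
        rw [sub_sub_sub_comm]; exact norm_sub_le_of_lipschitz_each hGd hGu _ _ _ _
    _ ≤ Cd * (‖x i - xbar i‖ + ‖x j - xbar j‖) + Cu * (M + L * ‖x i - xbar i‖) := by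
        gcongr; exact norm_sub_le _ _
    _ = _ := by ring
  calc ‖pV N G u x i - pV N G ubar xbar i‖
      = (N : ℝ)⁻¹ * ‖∑ j, (G (x i - x j) (u (x i)) - G (xbar i - xbar j) (ubar (xbar i)))‖ := by
        rw [pV, pV, ← smul_sub, ← Finset.sum_sub_distrib, norm_smul, norm_inv, Real.norm_natCast]
    _ ≤ (N : ℝ)⁻¹ * ∑ j, ((Cd + Cu * L) * ‖x i - xbar i‖ + Cu * M + Cd * ‖x j - xbar j‖) := by
        gcongr; exact (norm_sum_le _ _).trans (Finset.sum_le_sum fun j _ => hterm j)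
    _ = _ := by
        simp only [Finset.sum_add_distrib, Finset.sum_const, Finset.card_univ, Fintype.card_fin,
          nsmul_eq_mul, ← Finset.mul_sum]
        field_simp
        ring

/-- Gronwall-type stability estimate for the particle system: there are constants
`a, b > 0` depending only on `C_d`, `C_u` and `L` (in particular independent of `N`)
such that `(1/N) Σ_i |x_i(t) − x̄_i(t)|² ≤ ((1/N) Σ_i |x_i(0) − x̄_i(0)|² + b M²) e^{at}`. -/
theorem particle_system_stability (Cd Cu L : ℝ)
    (hCd : 0 ≤ Cd) (hCu : 0 ≤ Cu) (hL : 0 ≤ L) :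
    ∃ a > (0 : ℝ), ∃ b > (0 : ℝ),
      ∀ (N : ℕ), 1 ≤ N →
      ∀ G : E2 → E2 → E2, (∃ M, ∀ d p, ‖G d p‖ ≤ M) →
      (∀ d dbar p : E2, ‖G d p - G dbar p‖ ≤ Cd * ‖d - dbar‖) →
      (∀ d p pbar : E2, ‖G d p - G d pbar‖ ≤ Cu * ‖p - pbar‖) →
      ∀ u ubar : E2 → E2, (∀ x y : E2, ‖ubar x - ubar y‖ ≤ L * ‖x - y‖) →
      ∀ M : ℝ, (∀ x : E2, ‖u x - ubar x‖ ≤ M) →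
      ∀ x xbar : ℝ → Fin N → E2,
        (∀ t ∈ Ici (0 : ℝ), HasDerivWithinAt x (pV N G u (x t)) (Ici 0) t) →
        (∀ t ∈ Ici (0 : ℝ), HasDerivWithinAt xbar (pV N G ubar (xbar t)) (Ici 0) t) →
        ∀ t ∈ Ici (0 : ℝ),
          (N : ℝ)⁻¹ * ∑ i : Fin N, ‖x t i - xbar t i‖ ^ 2
            ≤ ((N : ℝ)⁻¹ * ∑ i : Fin N, ‖x 0 i - xbar 0 i‖ ^ 2 + b * M ^ 2)
                * Real.exp (a * t) := by
  refine ⟨4 * Cd + 2 * Cu * L + Cu ^ 2 + 1, by positivity, 1, one_pos, ?_⟩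
  intro N _ G _ hGd hGu u ubar hub M hM x xbar hx hxbar t ht
  have hψ : ∀ s ∈ Ici (0 : ℝ),
      HasDerivWithinAt (fun s => (N : ℝ)⁻¹ * ∑ i, ‖x s i - xbar s i‖ ^ 2)
        ((N : ℝ)⁻¹ * ∑ i, 2 * ⟪x s i - xbar s i, pV N G u (x s) i - pV N G ubar (xbar s) i⟫)
        (Ici 0) s :=
    fun s hs => (HasDerivWithinAt.sum_norm_sq ((hx s hs).sub (hxbar s hs))).const_mul _
  have key := le_add_mul_exp_of_hasDerivWithinAt_le (K := 4 * Cd + 2 * Cu * L + Cu ^ 2 + 1)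
    (sq_nonneg M) hψ (fun s _ => ?_) ht
  · simpa using key
  have hψ₀ : 0 ≤ (N : ℝ)⁻¹ * ∑ i, ‖x s i - xbar s i‖ ^ 2 := by positivity
  refine (mean_inner_le_of_norm_le (γ := Cu * M) hCd
    (norm_pV_sub_pV_le hCd hCu hGd hGu hub hM (x s) (xbar s))).trans ?_
  linarith [mul_nonneg (sq_nonneg Cu) hψ₀,
    mul_nonneg (by positivity : 0 ≤ 4 * Cd + 2 * Cu * L + 1) (sq_nonneg M)]
end
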